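/- For every z in the open unit disk 𝔻, the Hankel operator with symbol φ̄_z (the complex conjugate of the Möbius transform φ_z) satisfies H_{φ̄_z} = −(k_{z̄} ⊗ k_z) on the Hardy space H², where z̄ is the complex conjugate of z. -/

import Mathlib

/-! For `n ≥ 0` the `n`-th Fourier coefficient of `H_f h` is `∫ w^{n+1} f h`. For `f = φ̄_z` one
has `w^{n+1} φ̄_z(w) = w Q(w) - √(1-|z|²) zⁿ k̄_z(w)` on the circle, with `Q` a polynomial. The
polynomial part integrates to `0` against `h ∈ H²`, so the coefficient is
`-√(1-|z|²) zⁿ ⟨k_z, h⟩`. Summing the geometric series `(1 - z w)⁻¹` shows that the `n`-th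
coefficient of `k_{z̄}` is `√(1-|z|²) zⁿ`, so this is also the `n`-th coefficient of
`-(k_{z̄} ⊗ k_z) h`. -/

open MeasureTheory Complex Metric InnerProductSpace
open scoped ENNReal ComplexConjugate

noncomputable section

namespace HTpaper

instance fact2pi : Fact (0 < 2 * Real.pi) := ⟨by positivity⟩

/-- The unit circle `∂𝔻`, modelled additively as `ℝ / 2πℤ`; the point `x` corresponds to
`e^{ix} ∈ ∂𝔻`.  In particular the coordinate function `z` is `fourier 1`, and the conjugation
map `z ↦ z̄` of the circle is `x ↦ -x`. -/
abbrev 𝕋 : Type := AddCircle (2 * Real.pi)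

/-- Normalized Lebesgue (Haar) measure on the circle. -/
abbrev μT : Measure 𝕋 := AddCircle.haarAddCircle

/-- The Lebesgue space `L²(∂𝔻)`. -/
abbrev L2 : Type := Lp ℂ 2 μT

/-- The Hardy space `H²`: the closed subspace of `L²` of functions whose Fourier
coefficients of negative index vanish, realized as the orthogonal complement of the
span of the Fourier modes `e^{inx}`, `n < 0`. -/
def Hardy : Submodule ℂ L2 :=
  (Submodule.span ℂ {v : L2 | ∃ n : ℤ, n < 0 ∧ v = fourierBasis n})ᗮ

instance : CompleteSpace Hardy := (Submodule.isClosed_orthogonal _).completeSpace_coe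

/-- The orthogonal projection `P : L² → H²`. -/
def P : L2 →L[ℂ] Hardy := Hardy.orthogonalProjectionOnto

/-- The inclusion `H² ⊆ L²`. -/
def ι : Hardy →L[ℂ] L2 := Hardy.subtypeL

lemma memLp_smul {f : 𝕋 → ℂ} (hf : MemLp f ⊤ μT) (h : L2) :
    MemLp (f • (h : 𝕋 → ℂ)) 2 μT :=
  (Lp.memLp h).smul hf

open Classical in
/-- The multiplication operator `h ↦ f·h` on `L²`, for `f ∈ L^∞` (junk value `0` if
`f ∉ L^∞`). -/
def mul (f : 𝕋 → ℂ) : L2 →L[ℂ] L2 :=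
  if hf : MemLp f ⊤ μT then
    LinearMap.mkContinuous
      { toFun := fun h => (memLp_smul hf h).toLp (f • (h : 𝕋 → ℂ))
        map_add' := fun h₁ h₂ => by
          rw [← MemLp.toLp_add]
          apply MemLp.toLp_congr
          filter_upwards [Lp.coeFn_add h₁ h₂] with x hx
          simp only [Pi.smul_apply, smul_eq_mul, hx, Pi.add_apply, Pi.mul_apply]
          ring
        map_smul' := fun c h => by
          simp only [RingHom.id_apply]
          rw [← MemLp.toLp_const_smul]
          apply MemLp.toLp_congr
          filter_upwards [Lp.coeFn_smul c h] with x hx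
          simp only [Pi.smul_apply, smul_eq_mul, hx, Pi.mul_apply]
          ring }
      (eLpNorm f ⊤ μT).toReal
      (fun h => by
        simp only [LinearMap.coe_mk, AddHom.coe_mk]
        rw [Lp.norm_toLp]
        calc (eLpNorm (f • (h : 𝕋 → ℂ)) 2 μT).toReal
            ≤ (eLpNorm f ⊤ μT * eLpNorm (h : 𝕋 → ℂ) 2 μT).toReal := by
              apply ENNReal.toReal_mono
              · exact ENNReal.mul_ne_top hf.eLpNorm_ne_top (Lp.memLp h).eLpNorm_ne_top
              · exact eLpNorm_smul_le_eLpNorm_top_mul_eLpNorm 2 (Lp.aestronglyMeasurable h) f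
          _ = (eLpNorm f ⊤ μT).toReal * ‖h‖ := by
              rw [ENNReal.toReal_mul, Lp.norm_def])
  else 0

lemma negMP : MeasurePreserving (Neg.neg : 𝕋 → 𝕋) μT μT :=
  Measure.measurePreserving_neg μT

lemma memLp_compNeg (h : L2) : MemLp ((h : 𝕋 → ℂ) ∘ (Neg.neg : 𝕋 → 𝕋)) 2 μT :=
  (Lp.memLp h).comp_measurePreserving negMP

/-- The composition operator `h ↦ (x ↦ h (-x))` on `L²`, i.e. `h(z) ↦ h(z̄)`. -/
def compNeg : L2 →L[ℂ] L2 :=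
  LinearMap.mkContinuous
    { toFun := fun h => (memLp_compNeg h).toLp ((h : 𝕋 → ℂ) ∘ (Neg.neg : 𝕋 → 𝕋))
      map_add' := fun h₁ h₂ => by
        rw [← MemLp.toLp_add]
        apply MemLp.toLp_congr
        filter_upwards [negMP.quasiMeasurePreserving.ae_eq_comp (Lp.coeFn_add h₁ h₂)] with x hx
        simpa using hx
      map_smul' := fun c h => by
        simp only [RingHom.id_apply]
        rw [← MemLp.toLp_const_smul]
        apply MemLp.toLp_congr
        filter_upwards [negMP.quasiMeasurePreserving.ae_eq_comp (Lp.coeFn_smul c h)] with x hx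
        simpa using hx }
    1
    (fun h => by
      simp only [LinearMap.coe_mk, AddHom.coe_mk, one_mul]
      rw [Lp.norm_toLp, eLpNorm_comp_measurePreserving (Lp.aestronglyMeasurable h) negMP,
        Lp.norm_def])

/-- The unitary operator `U : L² → L²`, `(Uh)(z) = z̄·h(z̄)`; on the additive circle,
`(Uh)(x) = e^{-ix}·h(-x)`. -/
def Uop : L2 →L[ℂ] L2 := (mul fun x => fourier (-1) x) ∘L compNeg

/-- The Toeplitz operator `T_f = P ∘ M_f : H² → H²` with symbol `f`. -/
def Toeplitz (f : 𝕋 → ℂ) : Hardy →L[ℂ] Hardy := P ∘L (mul f) ∘L ι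

/-- The Hankel operator `H_f = P ∘ U ∘ M_f : H² → H²` with symbol `f`. -/
def Hankel (f : 𝕋 → ℂ) : Hardy →L[ℂ] Hardy := P ∘L Uop ∘L (mul f) ∘L ι

/-- The rank-one operator `x ⊗ y : h ↦ ⟨h, y⟩·x` on `H²`. -/
def rankOne (x y : Hardy) : Hardy →L[ℂ] Hardy := (innerSL ℂ y).smulRight x

/-- `f̃(z) = f(z̄)`. -/
def tilde (f : 𝕋 → ℂ) : 𝕋 → ℂ := fun x => f (-x)

/-- `f̄(z) = conj (f z)`, the complex conjugate of `f`. -/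
def conjF (f : 𝕋 → ℂ) : 𝕋 → ℂ := fun x => conj (f x)

/-- `f*(z) = conj (f (z̄))`. -/
def starF (f : 𝕋 → ℂ) : 𝕋 → ℂ := fun x => conj (f (-x))

/-- The open unit disk `𝔻 ⊆ ℂ`. -/
abbrev unitDisk : Set ℂ := Metric.ball (0 : ℂ) 1

lemma norm_lt_one (z : unitDisk) : ‖(z : ℂ)‖ < 1 := mem_ball_zero_iff.mp z.2

/-- `z̄`, as a point of the unit disk. -/
def conjD (z : unitDisk) : unitDisk :=
  ⟨conj (z : ℂ), by rw [mem_ball_zero_iff, RCLike.norm_conj]; exact norm_lt_one z⟩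

lemma norm_fourier_one (x : 𝕋) : ‖fourier 1 x‖ = 1 := by
  rw [fourier_apply]; exact Circle.norm_coe _

lemma denom_ne_zero (z : unitDisk) (x : 𝕋) : (1 : ℂ) - conj (z : ℂ) * fourier 1 x ≠ 0 := by
  intro h
  have h1 : (1 : ℂ) = conj (z : ℂ) * fourier 1 x := sub_eq_zero.mp h
  have h2 : (1 : ℝ) = ‖conj (z : ℂ)‖ * ‖fourier 1 x‖ := by
    rw [← norm_mul, ← h1, norm_one]
  rw [RCLike.norm_conj, norm_fourier_one, mul_one] at h2
  exact absurd h2.symm (ne_of_lt (norm_lt_one z))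

/-- The reproducing-kernel function `w ↦ √(1−|z|²)/(1−z̄w)` on the circle (`w = e^{ix}`). -/
def kernelCM (z : unitDisk) : C(𝕋, ℂ) :=
  ⟨fun x => (Real.sqrt (1 - ‖(z : ℂ)‖ ^ 2) : ℂ) / (1 - conj (z : ℂ) * fourier 1 x),
    (continuous_const.div (continuous_const.sub (continuous_const.mul (fourier 1).continuous))
      (denom_ne_zero z))⟩

/-- The normalized reproducing kernel `k_z ∈ H²` for `z ∈ 𝔻`.  (The function `kernelCM z`
belongs to the Hardy space, so the projection `P` fixes it.) -/
def kernel (z : unitDisk) : Hardy := P (ContinuousMap.toLp (E := ℂ) 2 μT ℂ (kernelCM z))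

/-- The Möbius transform `φ_z(w) = (z−w)/(1−z̄w)`, as a function on the circle. -/
def mobius (z : unitDisk) : 𝕋 → ℂ :=
  fun x => ((z : ℂ) - fourier 1 x) / (1 - conj (z : ℂ) * fourier 1 x)

/-- The filter on the unit disk expressing `|z| → 1⁻`. -/
def toBoundary : Filter unitDisk :=
  Filter.comap (fun z : unitDisk => ‖(z : ℂ)‖) (nhdsWithin 1 (Set.Iio 1))

lemma memLp_starL2 (h : L2) : MemLp (fun x => conj ((h : 𝕋 → ℂ) (-x))) 2 μT :=
  ⟨Complex.continuous_conj.comp_aestronglyMeasurable (memLp_compNeg h).1,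
    by
      rw [eLpNorm_congr_norm_ae (Filter.Eventually.of_forall fun x => RCLike.norm_conj _)]
      exact (memLp_compNeg h).2⟩

/-- The map `h ↦ h*`, `h*(z) = conj (h(z̄))`, on `L²`. -/
def starL2 (h : L2) : L2 := (memLp_starL2 h).toLp _

/-- The space `H^∞` of bounded analytic functions: bounded measurable functions on the
circle whose Fourier coefficients of negative index vanish. -/
def HinfSet : Set (𝕋 → ℂ) :=
  {f | MemLp f ⊤ μT ∧ ∀ n : ℤ, n < 0 → fourierCoeff f n = 0}

/-- `H^∞ + C`: functions that agree a.e. with the sum of an `H^∞` function and a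
continuous function. -/
def HinfPlusC : Set (𝕋 → ℂ) :=
  {f | ∃ h c : 𝕋 → ℂ, h ∈ HinfSet ∧ Continuous c ∧ f =ᵐ[μT] h + c}

/-- The property of being a closed subalgebra of `L^∞` containing `H^∞` and the set `s`
(at the level of functions; "closed" is with respect to the essential-sup norm, and the
defining predicates are invariant under a.e. modification). -/
structure IsClosedSubalgebraContaining (s A : Set (𝕋 → ℂ)) : Prop where
  mem_Linf : ∀ f ∈ A, MemLp f ⊤ μT
  add_mem : ∀ f ∈ A, ∀ g ∈ A, f + g ∈ A
  mul_mem : ∀ f ∈ A, ∀ g ∈ A, f * g ∈ A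
  smul_mem : ∀ (c : ℂ), ∀ f ∈ A, c • f ∈ A
  closed : ∀ f : 𝕋 → ℂ, MemLp f ⊤ μT →
    (∀ ε : ℝ≥0∞, 0 < ε → ∃ g ∈ A, eLpNorm (f - g) ⊤ μT < ε) → f ∈ A
  hinf_subset : HinfSet ⊆ A
  gen_subset : s ⊆ A

/-- `H^∞[s]`: the smallest closed subalgebra of `L^∞` containing `H^∞` and `s`. -/
def HinfAdjoin (s : Set (𝕋 → ℂ)) : Set (𝕋 → ℂ) :=
  ⋂₀ {A | IsClosedSubalgebraContaining s A}

section FourierCoeff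

open AddCircle

variable {T : ℝ} [Fact (0 < T)]

omit [Fact (0 < T)] in
lemma fourier_one_pow (n : ℕ) (x : AddCircle T) : fourier 1 x ^ n = fourier n x := by
  induction n with
  | zero => simp
  | succ n ih => rw [pow_succ, ih, ← fourier_add]; push_cast; rfl

lemma hasSum_fourierCoeff_inv_one_sub_mul_fourier {a : ℂ} (ha : ‖a‖ < 1) (k : ℤ) :
    HasSum (fun n : ℕ => a ^ n * Pi.single (M := fun _ => ℂ) (n : ℤ) 1 k)
      (fourierCoeff (fun x : AddCircle T => (1 - a * fourier 1 x)⁻¹) k) := by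
  set F : ℕ → AddCircle T → ℂ := fun n x => fourier (-k) x * (a * fourier 1 x) ^ n
  have hnorm (n : ℕ) (x : AddCircle T) : ‖F n x‖ = ‖a‖ ^ n := by
    simp [F, norm_pow, Circle.norm_coe]
  have hsum := hasSum_integral_of_summable_integral_norm (μ := haarAddCircle) (F := F)
    (fun n => (by fun_prop : Continuous (F n)).integrable_of_hasCompactSupport (.of_compactSpace _))
    (by simpa [hnorm] using summable_geometric_of_lt_one (norm_nonneg a) ha)
  have hterm (n : ℕ) :
      ∫ x, F n x ∂haarAddCircle = a ^ n * Pi.single (M := fun _ => ℂ) (n : ℤ) 1 k := by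
    have hF : F n = fun x => a ^ n * (fourier (-k) x • fourier n x) := by
      ext x; simp only [F, mul_pow, fourier_one_pow, smul_eq_mul]; ring
    rw [hF, integral_const_mul, ← fourierCoeff_fourier (T := T)]
    rfl
  have hpt (x : AddCircle T) : ∑' n, F n x = fourier (-k) x • (1 - a * fourier 1 x)⁻¹ := by
    rw [tsum_mul_left, tsum_geometric_of_norm_lt_one (by simpa [Circle.norm_coe] using ha),
      smul_eq_mul]
  simp only [hterm, hpt] at hsum
  exact hsum

lemma fourierCoeff_inv_one_sub_mul_fourier_natCast {a : ℂ} (ha : ‖a‖ < 1) (n : ℕ) :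
    fourierCoeff (fun x : AddCircle T => (1 - a * fourier 1 x)⁻¹) n = a ^ n := by
  refine (hasSum_fourierCoeff_inv_one_sub_mul_fourier ha n).unique ?_
  simpa using hasSum_single
    (f := fun m : ℕ => a ^ m * Pi.single (M := fun _ => ℂ) (m : ℤ) 1 n) n fun m hm => by simp [hm]

lemma fourierCoeff_inv_one_sub_mul_fourier_of_neg {a : ℂ} (ha : ‖a‖ < 1) {k : ℤ}
    (hk : k < 0) :
    fourierCoeff (fun x : AddCircle T => (1 - a * fourier 1 x)⁻¹) k = 0 := by
  refine (hasSum_fourierCoeff_inv_one_sub_mul_fourier ha k).unique ?_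
  convert hasSum_zero with n
  simp [show k ≠ n by omega]

omit [Fact (0 < T)] in
lemma fourier_apply_neg (n : ℤ) (x : AddCircle T) : fourier n (-x) = fourier (-n) x := by
  rw [fourier_apply, smul_neg, fourier_neg', ← fourier_neg]

lemma memLp_top_of_continuous {f : AddCircle T → ℂ} (hf : Continuous f) :
    MemLp f ⊤ haarAddCircle := by
  obtain ⟨C, hC⟩ := isCompact_univ.exists_bound_of_continuousOn hf.continuousOn
  exact memLp_top_of_bound hf.aestronglyMeasurable C (.of_forall fun x => hC x trivial)

lemma integrable_continuous_mul_Lp {φ : AddCircle T → ℂ} (hφ : Continuous φ)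
    (g : Lp ℂ 2 (haarAddCircle (T := T))) : Integrable (fun y => φ y * g y) haarAddCircle :=
  ((Lp.memLp g).integrable one_le_two).mul_of_top_right (memLp_top_of_continuous hφ)

end FourierCoeff

section Hardy

lemma mem_Hardy_iff {v : L2} :
    v ∈ Hardy ↔ ∀ n : ℤ, n < 0 → fourierCoeff (v : 𝕋 → ℂ) n = 0 := by
  constructor
  · intro hv n hn
    rw [← fourierBasis_repr, fourierBasis.repr_apply_apply]
    exact hv _ (Submodule.subset_span ⟨n, hn, rfl⟩)
  · intro H
    rw [Hardy, Submodule.mem_orthogonal]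
    intro u hu
    induction hu using Submodule.span_induction with
    | mem x hx =>
        obtain ⟨n, hn, rfl⟩ := hx
        rw [← fourierBasis.repr_apply_apply, fourierBasis_repr]
        exact H n hn
    | zero => simp
    | add x y _ _ hx hy => rw [inner_add_left, hx, hy, add_zero]
    | smul c x _ hx => rw [inner_smul_left, hx, mul_zero]

lemma fourierCoeff_coe_Hardy_of_neg (h : Hardy) {n : ℤ} (hn : n < 0) :
    fourierCoeff ((h : L2) : 𝕋 → ℂ) n = 0 :=
  mem_Hardy_iff.mp h.2 n hn

lemma fourierBasis_natCast_mem_Hardy (n : ℕ) : fourierBasis (n : ℤ) ∈ Hardy := by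
  refine mem_Hardy_iff.mpr fun m hm => ?_
  rw [← fourierBasis_repr, fourierBasis.repr_self, lp.single_apply, Pi.single_apply,
    if_neg (by omega)]

lemma fourierCoeff_P (g : L2) (n : ℕ) :
    fourierCoeff ((P g : L2) : 𝕋 → ℂ) n = fourierCoeff (g : 𝕋 → ℂ) n := by
  have horth : ⟪fourierBasis (n : ℤ), g - (P g : L2)⟫_ℂ = 0 :=
    Submodule.inner_right_of_mem_orthogonal (fourierBasis_natCast_mem_Hardy n)
      (Hardy.sub_starProjection_mem_orthogonal g)
  rw [inner_sub_right, sub_eq_zero] at horth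
  rw [← fourierBasis_repr, ← fourierBasis_repr, fourierBasis.repr_apply_apply,
    fourierBasis.repr_apply_apply, ← horth]

lemma Hardy_ext {a b : Hardy}
    (H : ∀ n : ℕ, fourierCoeff ((a : L2) : 𝕋 → ℂ) n = fourierCoeff ((b : L2) : 𝕋 → ℂ) n) :
    a = b := by
  refine Subtype.ext (fourierBasis.repr.injective (lp.ext (funext fun n => ?_)))
  rw [fourierBasis_repr, fourierBasis_repr]
  rcases lt_or_ge n 0 with hn | hn
  · rw [fourierCoeff_coe_Hardy_of_neg a hn, fourierCoeff_coe_Hardy_of_neg b hn]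
  · lift n to ℕ using hn
    exact H n

lemma integral_fourier_mul_coe_Hardy {n : ℕ} (hn : 0 < n) (h : Hardy) :
    ∫ y, fourier (n : ℤ) y * (h : L2) y ∂μT = 0 := by
  have := fourierCoeff_coe_Hardy_of_neg h (n := -n) (by omega)
  simpa only [fourierCoeff, neg_neg, smul_eq_mul] using this

open Polynomial in
lemma integral_fourier_one_mul_eval_mul_coe_Hardy (Q : ℂ[X]) (h : Hardy) :
    ∫ y, fourier 1 y * Q.eval (fourier 1 y) * (h : L2) y ∂μT = 0 := by
  have hQ (y : 𝕋) : fourier 1 y * Q.eval (fourier 1 y) * (h : L2) y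
      = ∑ i ∈ Finset.range (Q.natDegree + 1),
          Q.coeff i * (fourier ((i + 1 : ℕ) : ℤ) y * (h : L2) y) := by
    rw [eval_eq_sum_range, Finset.mul_sum, Finset.sum_mul]
    refine Finset.sum_congr rfl fun i _ => ?_
    rw [← fourier_one_pow, pow_succ]
    ring
  simp_rw [hQ]
  rw [integral_finsetSum _ fun i _ =>
    (integrable_continuous_mul_Lp (map_continuous _) _).const_mul _]
  exact Finset.sum_eq_zero fun i _ => by
    rw [integral_const_mul, integral_fourier_mul_coe_Hardy i.succ_pos, mul_zero]

end Hardy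

section Operators

lemma coeFn_mul {f : 𝕋 → ℂ} (hf : MemLp f ⊤ μT) (g : L2) :
    mul f g =ᵐ[μT] fun x => f x * g x := by
  rw [mul, dif_pos hf]
  exact (memLp_smul hf g).coeFn_toLp

lemma coeFn_compNeg (g : L2) : compNeg g =ᵐ[μT] fun x => g (-x) :=
  (memLp_compNeg g).coeFn_toLp

lemma fourierCoeff_Uop (g : L2) (n : ℤ) :
    fourierCoeff (Uop g : 𝕋 → ℂ) n = fourierCoeff (g : 𝕋 → ℂ) (-(n + 1)) := by
  have hU : Uop g =ᵐ[μT] fun x => fourier (-1) x * g (-x) := by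
    filter_upwards [coeFn_compNeg g,
      coeFn_mul (memLp_top_of_continuous (map_continuous (fourier (-1)))) (compNeg g)]
      with x hneg hmul
    rw [Uop, ContinuousLinearMap.comp_apply, hmul, hneg]
  rw [fourierCoeff_congr_ae hU, fourierCoeff, fourierCoeff, ← integral_neg_eq_self]
  congr 1
  ext x
  simp only [fourier_apply_neg, neg_neg, smul_eq_mul, ← mul_assoc, ← fourier_add]

lemma fourierCoeff_Hankel {f : 𝕋 → ℂ} (hf : MemLp f ⊤ μT) (h : Hardy) (n : ℕ) :
    fourierCoeff ((Hankel f h : L2) : 𝕋 → ℂ) n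
      = ∫ y, fourier (n + 1 : ℤ) y * f y * (h : L2) y ∂μT := by
  rw [Hankel, ContinuousLinearMap.comp_apply, fourierCoeff_P, ContinuousLinearMap.comp_apply,
    fourierCoeff_Uop, ContinuousLinearMap.comp_apply, fourierCoeff_congr_ae (coeFn_mul hf _),
    fourierCoeff, neg_neg]
  simp only [smul_eq_mul, mul_assoc]
  rfl

lemma fourierCoeff_neg_rankOne_apply (x y h : Hardy) (n : ℤ) :
    fourierCoeff ((-rankOne x y h : Hardy) : 𝕋 → ℂ) n
      = -(⟪y, h⟫_ℂ * fourierCoeff ((x : L2) : 𝕋 → ℂ) n) := by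
  rw [← fourierBasis_repr, ← fourierBasis_repr]
  simp [rankOne]
  rfl

end Operators

section Kernel

lemma coe_kernelCM (z : unitDisk) :
    (kernelCM z : 𝕋 → ℂ)
      = fun x => (√(1 - ‖(z : ℂ)‖ ^ 2) : ℂ) * (1 - conj (z : ℂ) * fourier 1 x)⁻¹ :=
  funext fun _ => div_eq_mul_inv _ _

lemma norm_conj_lt_one (z : unitDisk) : ‖conj (z : ℂ)‖ < 1 := by
  rw [RCLike.norm_conj]
  exact norm_lt_one z

lemma fourierCoeff_kernelCM_natCast (z : unitDisk) (n : ℕ) :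
    fourierCoeff (kernelCM z : 𝕋 → ℂ) n = √(1 - ‖(z : ℂ)‖ ^ 2) * conj (z : ℂ) ^ n := by
  rw [coe_kernelCM, fourierCoeff.const_mul,
    fourierCoeff_inv_one_sub_mul_fourier_natCast (norm_conj_lt_one z)]

lemma fourierCoeff_kernelCM_of_neg (z : unitDisk) {k : ℤ} (hk : k < 0) :
    fourierCoeff (kernelCM z : 𝕋 → ℂ) k = 0 := by
  rw [coe_kernelCM, fourierCoeff.const_mul,
    fourierCoeff_inv_one_sub_mul_fourier_of_neg (norm_conj_lt_one z) hk, mul_zero]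

lemma coe_kernel (z : unitDisk) :
    (kernel z : L2) = ContinuousMap.toLp 2 μT ℂ (kernelCM z) := by
  refine Submodule.starProjection_eq_self_iff.mpr (mem_Hardy_iff.mpr fun k hk => ?_)
  rw [fourierCoeff_toLp, fourierCoeff_kernelCM_of_neg z hk]

lemma fourierCoeff_kernel (z : unitDisk) (n : ℕ) :
    fourierCoeff ((kernel z : L2) : 𝕋 → ℂ) n = √(1 - ‖(z : ℂ)‖ ^ 2) * conj (z : ℂ) ^ n := by
  rw [coe_kernel, fourierCoeff_toLp, fourierCoeff_kernelCM_natCast]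

lemma inner_kernel_left (z : unitDisk) (h : Hardy) :
    ⟪kernel z, h⟫_ℂ = ∫ y, conj (kernelCM z y) * (h : L2) y ∂μT := by
  rw [Submodule.coe_inner, L2.inner_def, coe_kernel]
  refine integral_congr_ae ?_
  filter_upwards [ContinuousMap.coeFn_toLp (p := 2) (μ := μT) (𝕜 := ℂ) (kernelCM z)]
    with y hy
  rw [RCLike.inner_apply', hy]

end Kernel

section Mobius

open Polynomial

lemma memLp_top_conjF_mobius (z : unitDisk) : MemLp (conjF (mobius z)) ⊤ μT :=
  memLp_top_of_continuous <| Complex.continuous_conj.comp <|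
    (continuous_const.sub (map_continuous (fourier 1))).div
      (continuous_const.sub (continuous_const.mul (map_continuous (fourier 1))))
      (denom_ne_zero z)

lemma exists_fourier_mul_conjF_mobius_eq (z : unitDisk) (n : ℕ) :
    ∃ Q : ℂ[X], ∀ y, fourier (n + 1 : ℤ) y * conjF (mobius z) y
      = fourier 1 y * Q.eval (fourier 1 y)
        - √(1 - ‖(z : ℂ)‖ ^ 2) * (z : ℂ) ^ n * conj (kernelCM z y) := by
  -- `Q = N / (X - z)`, where `N = Xⁿ (z̄ X - 1) + (1 - |z|²) zⁿ` vanishes at `z`. Since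
  -- `w̄ = w⁻¹` on the circle, the claim reduces to
  -- `w^{n+1} (z̄ w - 1) = w ((w - z) Q(w) - (1 - |z|²) zⁿ)`, `w` times the identity defining `Q`.
  obtain ⟨Q, hQ⟩ : ∃ Q : ℂ[X], (X - C (z : ℂ)) * Q
      = X ^ n * (C (conj (z : ℂ)) * X - 1) + C ((1 - (z : ℂ) * conj (z : ℂ)) * (z : ℂ) ^ n) :=
    ⟨_, mul_divByMonic_eq_iff_isRoot.mpr <| by
      simp only [IsRoot, eval_add, eval_mul, eval_pow, eval_X, eval_sub, eval_C, eval_one]; ring⟩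
  refine ⟨Q, fun y => ?_⟩
  replace hQ := congrArg (eval (fourier 1 y)) hQ
  simp only [eval_add, eval_mul, eval_pow, eval_X, eval_sub, eval_C, eval_one] at hQ
  rw [show ((n : ℤ) + 1) = ((n + 1 : ℕ) : ℤ) by push_cast; rfl, ← fourier_one_pow]
  simp only [conjF, mobius, kernelCM, ContinuousMap.coe_mk, map_div₀, map_sub, map_mul,
    map_one, Complex.conj_conj, Complex.conj_ofReal]
  set u : ℂ := fourier 1 y
  have hu : ‖u‖ = 1 := norm_fourier_one y
  have hu0 : u ≠ 0 := norm_ne_zero_iff.mp (by rw [hu]; exact one_ne_zero)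
  have hconj : conj u = u⁻¹ := by
    rw [inv_def, Complex.normSq_eq_norm_sq, hu]; simp
  have huz : u - z ≠ 0 := by
    intro h
    have := norm_lt_one z
    rw [← sub_eq_zero.mp h, hu] at this
    exact lt_irrefl _ this
  have hsq : ((√(1 - ‖(z : ℂ)‖ ^ 2) : ℝ) : ℂ) ^ 2 = 1 - z * conj (z : ℂ) := by
    rw [← Complex.ofReal_pow, Real.sq_sqrt (by nlinarith [norm_lt_one z, norm_nonneg (z : ℂ)]),
      Complex.mul_conj']
    push_cast; ring
  rw [hconj]
  field_simp
  linear_combination (-u) * hQ + u * (z : ℂ) ^ n * hsq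

end Mobius

/-- `H_{φ̄_z} = −(k_{z̄} ⊗ k_z)` for every `z ∈ 𝔻`. -/
theorem hankel_conj_mobius_eq_neg_rankOne (z : unitDisk) :
    Hankel (conjF (mobius z)) = -rankOne (kernel (conjD z)) (kernel z) := by
  ext1 h
  refine Hardy_ext fun n => ?_
  obtain ⟨Q, hQ⟩ := exists_fourier_mul_conjF_mobius_eq z n
  set c : ℂ := √(1 - ‖(z : ℂ)‖ ^ 2) * (z : ℂ) ^ n
  calc fourierCoeff ((Hankel (conjF (mobius z)) h : L2) : 𝕋 → ℂ) n
      = ∫ y, fourier (n + 1 : ℤ) y * conjF (mobius z) y * (h : L2) y ∂μT :=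
        fourierCoeff_Hankel (memLp_top_conjF_mobius z) h n
    _ = ∫ y, fourier 1 y * Q.eval (fourier 1 y) * (h : L2) y
          - c * (conj (kernelCM z y) * (h : L2) y) ∂μT := by
        congr 1 with y
        rw [hQ]
        ring
    _ = -(⟪kernel z, h⟫_ℂ * c) := by
        rw [integral_sub, integral_fourier_one_mul_eval_mul_coe_Hardy, integral_const_mul,
          inner_kernel_left]
        · ring
        · exact integrable_continuous_mul_Lp (by fun_prop) _
        · exact (integrable_continuous_mul_Lp (by fun_prop) _).const_mul _
    _ = fourierCoeff ((-rankOne (kernel (conjD z)) (kernel z) h : Hardy) : 𝕋 → ℂ) n := by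
        rw [fourierCoeff_neg_rankOne_apply, fourierCoeff_kernel]
        simp [conjD, c]

end HTpaper
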